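/- There exists a constant C > 0 such that for every γ ∈ ℝ and all integers k₁,…,k₅ with k₁+k₂+k₃+k₄ = 0, (k₁+k₂)(k₃+k₄) ≠ 0, and 8³·max_{1≤j≤4}|k_j| < |k₅|, the quantity q₂^{(5)}(k₁,…,k₅) is well defined (its denominators are nonzero) and | −(4/5)·i·γ²·k₅ + q₂^{(5)}(k₁,…,k₅) | ≤ C·γ²·( max{|k₁k₂|, |k₃k₄|}/|k₁+k₂| + max_{1≤j≤4}|k_j| ). (Here −(4/5)iγ²k₅ is the value of the multiplier M₁^{(5)} and q₂^{(5)} is the value of the multiplier M₉^{(5)} on this region, so this is the cancellation |M₁^{(5)} + M₉^{(5)}| ≲ max{|k₁k₂|,|k₃k₄|}/|k_{1,2}| + max_{1≤j≤4}|k_j| of Proposition 4.2.) -/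

import Mathlib

/-- `Φ₀^{(3)}` in factored form. -/
noncomputable def Phi0_3 (x y z : ℤ) : ℂ :=
  -(5 / 2) * Complex.I * ((x + y : ℤ) : ℂ) * ((y + z : ℤ) : ℂ) * ((x + z : ℤ) : ℂ) *
    (((x + y : ℤ) : ℂ) ^ 2 + ((y + z : ℤ) : ℂ) ^ 2 + ((x + z : ℤ) : ℂ) ^ 2)

/-- The cubic multiplier `Q₁^{(3)}`. -/
noncomputable def Q1_3 (γ : ℝ) (x y z : ℤ) : ℂ :=
  -(Complex.I / 3) * (γ : ℂ) * ((x + y + z : ℤ) : ℂ) *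
    (((x + y : ℤ) : ℂ) ^ 2 + ((y + z : ℤ) : ℂ) ^ 2 + ((x + z : ℤ) : ℂ) ^ 2)

/-- The quintic multiplier `q₂^{(5)}`. -/
noncomputable def q2_5 (γ : ℝ) (k₁ k₂ k₃ k₄ k₅ : ℤ) : ℂ :=
  (9 / 2) * (Q1_3 γ k₁ k₂ (k₃ + k₄ + k₅) / Phi0_3 k₁ k₂ (k₃ + k₄ + k₅) * Q1_3 γ k₃ k₄ k₅ +
    Q1_3 γ k₃ k₄ (k₁ + k₂ + k₅) / Phi0_3 k₃ k₄ (k₁ + k₂ + k₅) * Q1_3 γ k₁ k₂ k₅)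

lemma term_bd2 (a b c k m : ℤ) (ha : |a| ≤ m) (hb : |b| ≤ m) (hc : |c| ≤ m)
    (co : ℤ) (p q r : ℕ) (h4 : p + q + r = 4) :
    |co * (a^p*b^q*c^r*k^2)| ≤ |co| * (m^4 * k^2) := by
  have h0 : (0:ℤ) ≤ m := le_trans (abs_nonneg a) ha
  have e1 : |co * (a^p*b^q*c^r*k^2)| = |co| * (|a|^p * |b|^q * |c|^r * |k|^2) := by
    rw [abs_mul, abs_mul, abs_mul, abs_mul, abs_pow, abs_pow, abs_pow, abs_pow]
  rw [e1]
  apply mul_le_mul_of_nonneg_left _ (abs_nonneg co)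
  calc |a|^p * |b|^q * |c|^r * |k|^2 ≤ m^p * m^q * m^r * |k|^2 := by
        gcongr <;> first | exact abs_nonneg _ | exact pow_nonneg h0 _ | exact mul_nonneg (pow_nonneg h0 _) (pow_nonneg h0 _)
    _ = m^4 * k^2 := by rw [← pow_add, ← pow_add, h4, sq_abs]

lemma term_bd1 (a b c k m : ℤ) (ha : |a| ≤ m) (hb : |b| ≤ m) (hc : |c| ≤ m)
    (hk : m ≤ |k|) (co : ℤ) (p q r : ℕ) (h4 : p + q + r = 5) :
    |co * (a^p*b^q*c^r*k^1)| ≤ |co| * (m^4 * k^2) := by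
  have h0 : (0:ℤ) ≤ m := le_trans (abs_nonneg a) ha
  have e1 : |co * (a^p*b^q*c^r*k^1)| = |co| * (|a|^p * |b|^q * |c|^r * |k|^1) := by
    rw [abs_mul, abs_mul, abs_mul, abs_mul, abs_pow, abs_pow, abs_pow, abs_pow]
  rw [e1]
  apply mul_le_mul_of_nonneg_left _ (abs_nonneg co)
  calc |a|^p * |b|^q * |c|^r * |k|^1 ≤ m^p * m^q * m^r * |k|^1 := by
        gcongr <;> first | exact abs_nonneg _ | exact pow_nonneg h0 _ | exact mul_nonneg (pow_nonneg h0 _) (pow_nonneg h0 _)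
    _ = m^4 * (m * |k|) := by rw [← pow_add, ← pow_add, h4]; ring
    _ ≤ m^4 * (|k| * |k|) := by
        have : m * |k| ≤ |k| * |k| := mul_le_mul_of_nonneg_right hk (abs_nonneg k)
        exact mul_le_mul_of_nonneg_left this (by positivity)
    _ = m^4 * k^2 := by rw [← sq_abs]; ring
set_option maxHeartbeats 2000000 in
lemma Nbound (a b c k m : ℤ) (ha : |a| ≤ m) (hb : |b| ≤ m) (hc : |c| ≤ m)
    (hk : m ≤ |k|) :
    |(-2) * (a^0*b^0*c^4*k^2) + (-4) * (a^0*b^1*c^3*k^2) + (-4) * (a^0*b^2*c^2*k^2) + (-2) * (a^0*b^3*c^1*k^2) + (-4) * (a^1*b^0*c^3*k^2) + (-8) * (a^1*b^1*c^2*k^2) + (-6) * (a^1*b^2*c^1*k^2) + (-2) * (a^1*b^3*c^0*k^2) + (-4) * (a^2*b^0*c^2*k^2) + (-6) * (a^2*b^1*c^1*k^2) + (-2) * (a^2*b^2*c^0*k^2) + (-2) * (a^3*b^0*c^1*k^2) + (-2) * (a^3*b^1*c^0*k^2) + (2) * (a^0*b^1*c^4*k^1) + (4) * (a^0*b^2*c^3*k^1)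 + (4) * (a^0*b^3*c^2*k^1) + (2) * (a^0*b^4*c^1*k^1) + (2) * (a^1*b^0*c^4*k^1) + (8) * (a^1*b^1*c^3*k^1) + (8) * (a^1*b^2*c^2*k^1) + (4) * (a^1*b^3*c^1*k^1) + (-2) * (a^1*b^4*c^0*k^1) + (4) * (a^2*b^0*c^3*k^1) + (8) * (a^2*b^1*c^2*k^1) + (4) * (a^2*b^2*c^1*k^1) + (-4) * (a^2*b^3*c^0*k^1) + (4) * (a^3*b^0*c^2*k^1) + (4) * (a^3*b^1*c^1*k^1) + (-4) * (a^3*b^2*c^0*k^1) + (2) * (a^4*b^0*c^1*k^1) + (-2) * (a^4*b^1*c^0*k^1)| ≤ 120 * (m^4 * k^2) := by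
  have h0 := term_bd2 a b c k m ha hb hc (-2) 0 0 4 (by norm_num)
  have h1 := term_bd2 a b c k m ha hb hc (-4) 0 1 3 (by norm_num)
  have h2 := term_bd2 a b c k m ha hb hc (-4) 0 2 2 (by norm_num)
  have h3 := term_bd2 a b c k m ha hb hc (-2) 0 3 1 (by norm_num)
  have h4 := term_bd2 a b c k m ha hb hc (-4) 1 0 3 (by norm_num)
  have h5 := term_bd2 a b c k m ha hb hc (-8) 1 1 2 (by norm_num)
  have h6 := term_bd2 a b c k m ha hb hc (-6) 1 2 1 (by norm_num)
  have h7 := term_bd2 a b c k m ha hb hc (-2) 1 3 0 (by norm_num)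
  have h8 := term_bd2 a b c k m ha hb hc (-4) 2 0 2 (by norm_num)
  have h9 := term_bd2 a b c k m ha hb hc (-6) 2 1 1 (by norm_num)
  have h10 := term_bd2 a b c k m ha hb hc (-2) 2 2 0 (by norm_num)
  have h11 := term_bd2 a b c k m ha hb hc (-2) 3 0 1 (by norm_num)
  have h12 := term_bd2 a b c k m ha hb hc (-2) 3 1 0 (by norm_num)
  have h13 := term_bd1 a b c k m ha hb hc hk (2) 0 1 4 (by norm_num)
  have h14 := term_bd1 a b c k m ha hb hc hk (4) 0 2 3 (by norm_num)
  have h15 := term_bd1 a b c k m ha hb hc hk (4) 0 3 2 (by norm_num)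
  have h16 := term_bd1 a b c k m ha hb hc hk (2) 0 4 1 (by norm_num)
  have h17 := term_bd1 a b c k m ha hb hc hk (2) 1 0 4 (by norm_num)
  have h18 := term_bd1 a b c k m ha hb hc hk (8) 1 1 3 (by norm_num)
  have h19 := term_bd1 a b c k m ha hb hc hk (8) 1 2 2 (by norm_num)
  have h20 := term_bd1 a b c k m ha hb hc hk (4) 1 3 1 (by norm_num)
  have h21 := term_bd1 a b c k m ha hb hc hk (-2) 1 4 0 (by norm_num)
  have h22 := term_bd1 a b c k m ha hb hc hk (4) 2 0 3 (by norm_num)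
  have h23 := term_bd1 a b c k m ha hb hc hk (8) 2 1 2 (by norm_num)
  have h24 := term_bd1 a b c k m ha hb hc hk (4) 2 2 1 (by norm_num)
  have h25 := term_bd1 a b c k m ha hb hc hk (-4) 2 3 0 (by norm_num)
  have h26 := term_bd1 a b c k m ha hb hc hk (4) 3 0 2 (by norm_num)
  have h27 := term_bd1 a b c k m ha hb hc hk (4) 3 1 1 (by norm_num)
  have h28 := term_bd1 a b c k m ha hb hc hk (-4) 3 2 0 (by norm_num)
  have h29 := term_bd1 a b c k m ha hb hc hk (2) 4 0 1 (by norm_num)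
  have h30 := term_bd1 a b c k m ha hb hc hk (-2) 4 1 0 (by norm_num)
  simp only [abs_neg, Nat.abs_ofNat] at h0 h1 h2 h3 h4 h5 h6 h7 h8 h9 h10 h11 h12 h13 h14 h15 h16 h17 h18 h19 h20 h21 h22 h23 h24 h25 h26 h27 h28 h29 h30
  obtain ⟨l0, r0⟩ := abs_le.mp h0
  obtain ⟨l1, r1⟩ := abs_le.mp h1
  obtain ⟨l2, r2⟩ := abs_le.mp h2
  obtain ⟨l3, r3⟩ := abs_le.mp h3
  obtain ⟨l4, r4⟩ := abs_le.mp h4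
  obtain ⟨l5, r5⟩ := abs_le.mp h5
  obtain ⟨l6, r6⟩ := abs_le.mp h6
  obtain ⟨l7, r7⟩ := abs_le.mp h7
  obtain ⟨l8, r8⟩ := abs_le.mp h8
  obtain ⟨l9, r9⟩ := abs_le.mp h9
  obtain ⟨l10, r10⟩ := abs_le.mp h10
  obtain ⟨l11, r11⟩ := abs_le.mp h11
  obtain ⟨l12, r12⟩ := abs_le.mp h12
  obtain ⟨l13, r13⟩ := abs_le.mp h13
  obtain ⟨l14, r14⟩ := abs_le.mp h14
  obtain ⟨l15, r15⟩ := abs_le.mp h15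
  obtain ⟨l16, r16⟩ := abs_le.mp h16
  obtain ⟨l17, r17⟩ := abs_le.mp h17
  obtain ⟨l18, r18⟩ := abs_le.mp h18
  obtain ⟨l19, r19⟩ := abs_le.mp h19
  obtain ⟨l20, r20⟩ := abs_le.mp h20
  obtain ⟨l21, r21⟩ := abs_le.mp h21
  obtain ⟨l22, r22⟩ := abs_le.mp h22
  obtain ⟨l23, r23⟩ := abs_le.mp h23
  obtain ⟨l24, r24⟩ := abs_le.mp h24
  obtain ⟨l25, r25⟩ := abs_le.mp h25
  obtain ⟨l26, r26⟩ := abs_le.mp h26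
  obtain ⟨l27, r27⟩ := abs_le.mp h27
  obtain ⟨l28, r28⟩ := abs_le.mp h28
  obtain ⟨l29, r29⟩ := abs_le.mp h29
  obtain ⟨l30, r30⟩ := abs_le.mp h30
  refine abs_le.mpr ⟨by linarith, by linarith⟩
lemma Phi0_3_ne (x y z : ℤ) (h1 : x + y ≠ 0) (h2 : y + z ≠ 0) (h3 : x + z ≠ 0) :
    Phi0_3 x y z ≠ 0 := by
  unfold Phi0_3
  have hq : ((x+y:ℤ):ℂ)^2 + ((y+z:ℤ):ℂ)^2 + ((x+z:ℤ):ℂ)^2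
      = (((x+y)^2+(y+z)^2+(x+z)^2 : ℤ):ℂ) := by push_cast; ring
  rw [hq]
  have hpos : (0:ℤ) < (x+y)^2+(y+z)^2+(x+z)^2 := by positivity
  refine mul_ne_zero (mul_ne_zero (mul_ne_zero (mul_ne_zero (mul_ne_zero ?_ Complex.I_ne_zero) ?_) ?_) ?_) ?_
  · norm_num
  · exact Int.cast_ne_zero.mpr h1
  · exact Int.cast_ne_zero.mpr h2
  · exact Int.cast_ne_zero.mpr h3
  · exact Int.cast_ne_zero.mpr (ne_of_gt hpos)

set_option maxHeartbeats 2000000 in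
lemma key_id (γ : ℝ) (a b c k : ℤ) (hs : a + b ≠ 0)
    (hka : k - a ≠ 0) (hkb : k - b ≠ 0) (hkc : k - c ≠ 0) (hkd : k + (a + b + c) ≠ 0) :
    -(4 / 5) * Complex.I * (γ : ℂ) ^ 2 * ((k : ℤ) : ℂ) + q2_5 γ a b c (-(a + b + c)) k =
      -(Complex.I / 5) * (γ : ℂ) ^ 2 *
        (((-2) * (a^0*b^0*c^4*k^2) + (-4) * (a^0*b^1*c^3*k^2) + (-4) * (a^0*b^2*c^2*k^2) + (-2) * (a^0*b^3*c^1*k^2) + (-4) * (a^1*b^0*c^3*k^2) + (-8) * (a^1*b^1*c^2*k^2) + (-6) * (a^1*b^2*c^1*k^2) + (-2) * (a^1*b^3*c^0*k^2) + (-4) * (a^2*b^0*c^2*k^2) + (-6) * (a^2*b^1*c^1*k^2) + (-2) * (a^2*b^2*c^0*k^2) + (-2) * (a^3*b^0*c^1*k^2) + (-2) * (a^3*b^1*c^0*k^2) + (2) * (a^0*b^1*c^4*k^1) + (4) * (a^0*b^2*c^3*k^1) + (4) * (a^0*b^3*c^2*k^1) + (2) * (a^0*b^4*c^1*k^1) +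 (2) * (a^1*b^0*c^4*k^1) + (8) * (a^1*b^1*c^3*k^1) + (8) * (a^1*b^2*c^2*k^1) + (4) * (a^1*b^3*c^1*k^1) + (-2) * (a^1*b^4*c^0*k^1) + (4) * (a^2*b^0*c^3*k^1) + (8) * (a^2*b^1*c^2*k^1) + (4) * (a^2*b^2*c^1*k^1) + (-4) * (a^2*b^3*c^0*k^1) + (4) * (a^3*b^0*c^2*k^1) + (4) * (a^3*b^1*c^1*k^1) + (-4) * (a^3*b^2*c^0*k^1) + (2) * (a^4*b^0*c^1*k^1) + (-2) * (a^4*b^1*c^0*k^1) : ℤ) : ℂ) /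
        (((a + b) * (k - a) * (k - b) * (k - c) * (k + (a + b + c)) : ℤ) : ℂ) := by
  have A1 : ((a:ℂ) + b) ≠ 0 := by
    have h : ((a + b : ℤ) : ℂ) ≠ 0 := Int.cast_ne_zero.mpr hs; push_cast at h; exact h
  have Ka : ((k:ℂ) - a) ≠ 0 := by
    have h : ((k - a : ℤ) : ℂ) ≠ 0 := Int.cast_ne_zero.mpr hka; push_cast at h; exact h
  have Kb : ((k:ℂ) - b) ≠ 0 := by
    have h : ((k - b : ℤ) : ℂ) ≠ 0 := Int.cast_ne_zero.mpr hkb; push_cast at h; exact h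
  have Kc : ((k:ℂ) - c) ≠ 0 := by
    have h : ((k - c : ℤ) : ℂ) ≠ 0 := Int.cast_ne_zero.mpr hkc; push_cast at h; exact h
  have Kd : ((k:ℂ) + ((a:ℂ) + b + c)) ≠ 0 := by
    have h : ((k + (a + b + c) : ℤ) : ℂ) ≠ 0 := Int.cast_ne_zero.mpr hkd; push_cast at h; exact h
  have hPhi1 : Phi0_3 a b (c + -(a + b + c) + k) ≠ 0 :=
    Phi0_3_ne _ _ _ hs (by omega) (by omega)
  have hPhi2 : Phi0_3 c (-(a + b + c)) (a + b + k) ≠ 0 :=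
    Phi0_3_ne _ _ _ (by omega) (by omega) (by omega)
  have hden1 : (15:ℂ) * (((a:ℂ) + b) * ((k:ℂ) - a) * ((k:ℂ) - b)) ≠ 0 :=
    mul_ne_zero (by norm_num) (mul_ne_zero (mul_ne_zero A1 Ka) Kb)
  have hden2 : (15:ℂ) * (((a:ℂ) + b) * ((k:ℂ) - c) * ((k:ℂ) + ((a:ℂ) + b + c))) ≠ 0 :=
    mul_ne_zero (by norm_num) (mul_ne_zero (mul_ne_zero A1 Kc) Kd)
  have r1 : Q1_3 γ a b (c + -(a + b + c) + k) / Phi0_3 a b (c + -(a + b + c) + k)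
      = (2 * (γ : ℂ) * (k : ℂ)) / ((15:ℂ) * (((a:ℂ) + b) * ((k:ℂ) - a) * ((k:ℂ) - b))) := by
    rw [div_eq_div_iff hPhi1 hden1]
    unfold Q1_3 Phi0_3
    push_cast
    ring
  have r2 : Q1_3 γ c (-(a + b + c)) (a + b + k) / Phi0_3 c (-(a + b + c)) (a + b + k)
      = (-(2 * (γ : ℂ) * (k : ℂ))) / ((15:ℂ) * (((a:ℂ) + b) * ((k:ℂ) - c) * ((k:ℂ) + ((a:ℂ) + b + c)))) := by
    rw [div_eq_div_iff hPhi2 hden2]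
    unfold Q1_3 Phi0_3
    push_cast
    ring
  have hD : (((a + b) * (k - a) * (k - b) * (k - c) * (k + (a + b + c)) : ℤ) : ℂ) ≠ 0 :=
    Int.cast_ne_zero.mpr
      (mul_ne_zero (mul_ne_zero (mul_ne_zero (mul_ne_zero hs hka) hkb) hkc) hkd)
  have r1' : Q1_3 γ a b (c + -(a + b + c) + k) / Phi0_3 a b (c + -(a + b + c) + k) *
        Q1_3 γ c (-(a + b + c)) k
      = (2 * (γ : ℂ) * (k : ℂ) * Q1_3 γ c (-(a + b + c)) k) /
        ((15:ℂ) * (((a:ℂ) + b) * ((k:ℂ) - a) * ((k:ℂ) - b))) := by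
    rw [r1, div_mul_eq_mul_div]
  have r2' : Q1_3 γ c (-(a + b + c)) (a + b + k) / Phi0_3 c (-(a + b + c)) (a + b + k) *
        Q1_3 γ a b k
      = (-(2 * (γ : ℂ) * (k : ℂ)) * Q1_3 γ a b k) /
        ((15:ℂ) * (((a:ℂ) + b) * ((k:ℂ) - c) * ((k:ℂ) + ((a:ℂ) + b + c)))) := by
    rw [r2, div_mul_eq_mul_div]
  unfold q2_5
  rw [r1', r2', div_add_div _ _ hden1 hden2, ← mul_div_assoc,
    add_div' _ _ _ (mul_ne_zero hden1 hden2),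
    div_eq_div_iff (mul_ne_zero hden1 hden2) hD]
  unfold Q1_3
  push_cast
  ring
lemma cabs_helper (γ : ℝ) (N D : ℤ) :
    ‖(-(Complex.I / 5) * (γ:ℂ)^2 * ((N:ℤ):ℂ) / ((D:ℤ):ℂ))‖
      = γ^2 * ((|N|:ℤ):ℝ) / (5 * ((|D|:ℤ):ℝ)) := by
  rw [norm_div, norm_mul, norm_mul]
  simp [Complex.norm_intCast, Complex.norm_I, sq_abs, abs_div]
  ring

set_option maxHeartbeats 2000000 in
theorem stmt15 :
    ∃ C : ℝ, 0 < C ∧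
      ∀ (γ : ℝ) (k₁ k₂ k₃ k₄ k₅ : ℤ),
        k₁ + k₂ + k₃ + k₄ = 0 →
        (k₁ + k₂) * (k₃ + k₄) ≠ 0 →
        8 ^ 3 * max |k₁| (max |k₂| (max |k₃| |k₄|)) < |k₅| →
        Phi0_3 k₁ k₂ (k₃ + k₄ + k₅) ≠ 0 ∧ Phi0_3 k₃ k₄ (k₁ + k₂ + k₅) ≠ 0 ∧
        ‖(-(4 / 5) * Complex.I * (γ : ℂ) ^ 2 * (k₅ : ℂ) + q2_5 γ k₁ k₂ k₃ k₄ k₅)‖ ≤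
          C * γ ^ 2 *
            (((max |k₁ * k₂| |k₃ * k₄| : ℤ) : ℝ) / ((|k₁ + k₂| : ℤ) : ℝ) +
              ((max |k₁| (max |k₂| (max |k₃| |k₄|)) : ℤ) : ℝ)) := by
  refine ⟨1, one_pos, ?_⟩
  intro γ k₁ k₂ k₃ k₄ k₅ hsum hne hbig
  have hd4 : k₄ = -(k₁ + k₂ + k₃) := by omega
  subst hd4
  set m : ℤ := max |k₁| (max |k₂| (max |k₃| |(-(k₁ + k₂ + k₃))|)) with hmdef
  have ha : |k₁| ≤ m := le_max_left _ _
  have hb : |k₂| ≤ m := le_trans (le_max_left _ _) (le_max_right _ _)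
  have hc : |k₃| ≤ m :=
    le_trans (le_max_left _ _) (le_trans (le_max_right _ _) (le_max_right _ _))
  have hd : |(-(k₁ + k₂ + k₃))| ≤ m :=
    le_trans (le_max_right _ _) (le_trans (le_max_right _ _) (le_max_right _ _))
  have hd' : |k₁ + k₂ + k₃| ≤ m := by rwa [abs_neg] at hd
  have hm0 : (0:ℤ) ≤ m := le_trans (abs_nonneg _) ha
  have hs : k₁ + k₂ ≠ 0 := fun h => hne (by rw [h, zero_mul])
  have hbig' : 512 * m < |k₅| := by
    have : (8:ℤ)^3 = 512 := by norm_num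
    rw [this] at hbig; exact hbig
  have hmk : m < |k₅| := by linarith
  have hm1 : (1:ℤ) ≤ m := by
    by_contra h
    push_neg at h
    have h1 : k₁ = 0 := abs_eq_zero.mp (le_antisymm (by linarith) (abs_nonneg _))
    have h2 : k₂ = 0 := abs_eq_zero.mp (le_antisymm (by linarith) (abs_nonneg _))
    exact hs (by omega)
  have hka : k₅ - k₁ ≠ 0 := by
    intro h
    have e : k₁ = k₅ := by omega
    rw [e] at ha; linarith
  have hkb : k₅ - k₂ ≠ 0 := by
    intro h
    have e : k₂ = k₅ := by omega
    rw [e] at hb; linarith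
  have hkc : k₅ - k₃ ≠ 0 := by
    intro h
    have e : k₃ = k₅ := by omega
    rw [e] at hc; linarith
  have hkd : k₅ + (k₁ + k₂ + k₃) ≠ 0 := by
    intro h
    have e : k₁ + k₂ + k₃ = -k₅ := by omega
    rw [e, abs_neg] at hd'; linarith
  refine ⟨Phi0_3_ne _ _ _ hs (by omega) (by omega),
    Phi0_3_ne _ _ _ (by omega) (by omega) (by omega), ?_⟩
  rw [key_id γ k₁ k₂ k₃ k₅ hs hka hkb hkc hkd, cabs_helper]
  -- notation
  set Nz : ℤ := (-2) * (k₁^0*k₂^0*k₃^4*k₅^2) + (-4) * (k₁^0*k₂^1*k₃^3*k₅^2) + (-4) * (k₁^0*k₂^2*k₃^2*k₅^2) + (-2) * (k₁^0*k₂^3*k₃^1*k₅^2) + (-4) * (k₁^1*k₂^0*k₃^3*k₅^2) + (-8) * (k₁^1*k₂^1*k₃^2*k₅^2) + (-6) * (k₁^1*k₂^2*k₃^1*k₅^2) + (-2) * (k₁^1*k₂^3*k₃^0*k₅^2) + (-4) * (k₁^2*k₂^0*k₃^2*k₅^2) + (-6) * (k₁^2*k₂^1*k₃^1*k₅^2)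 + (-2) * (k₁^2*k₂^2*k₃^0*k₅^2) + (-2) * (k₁^3*k₂^0*k₃^1*k₅^2) + (-2) * (k₁^3*k₂^1*k₃^0*k₅^2) + (2) * (k₁^0*k₂^1*k₃^4*k₅^1) + (4) * (k₁^0*k₂^2*k₃^3*k₅^1) + (4) * (k₁^0*k₂^3*k₃^2*k₅^1) + (2) * (k₁^0*k₂^4*k₃^1*k₅^1) + (2) * (k₁^1*k₂^0*k₃^4*k₅^1) + (8) * (k₁^1*k₂^1*k₃^3*k₅^1) + (8) * (k₁^1*k₂^2*k₃^2*k₅^1) + (4) * (k₁^1*k₂^3*k₃^1*k₅^1) + (-2) * (k₁^1*k₂^4*k₃^0*k₅^1) + (4) * (k₁^2*k₂^0*k₃^3*k₅^1) + (8) * (k₁^2*k₂^1*k₃^2*k₅^1) + (4) * (k₁^2*k₂^2*k₃^1*k₅^1) + (-4) * (k₁^2*k₂^3*k₃^0*k₅^1) + (4) * (k₁^3*k₂^0*k₃^2*k₅^1) + (4) * (k₁^3*k₂^1*k₃^1*k₅^1) + (-4) * (k₁^3*k₂^2*k₃^0*k₅^1) + (2) * (k₁^4*k₂^0*k₃^1*k₅^1)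 + (-2) * (k₁^4*k₂^1*k₃^0*k₅^1) with hNz
  set Dz : ℤ := (k₁ + k₂) * (k₅ - k₁) * (k₅ - k₂) * (k₅ - k₃) * (k₅ + (k₁ + k₂ + k₃)) with hDz
  set Mz : ℤ := max |k₁ * k₂| |k₃ * -(k₁ + k₂ + k₃)| with hMz
  -- integer estimates
  have hNb : |Nz| ≤ 120 * (m^4 * k₅^2) := Nbound k₁ k₂ k₃ k₅ m ha hb hc (le_of_lt hmk)
  -- m*m ≤ Mz + m * |k₁+k₂|
  have hm2 : m * m ≤ Mz + m * |k₁ + k₂| := by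
    have hM1 : |k₁ * k₂| ≤ Mz := le_max_left _ _
    have hM2 : |k₃ * -(k₁ + k₂ + k₃)| ≤ Mz := le_max_right _ _
    have e12 : |k₁ * k₂| = |k₁| * |k₂| := abs_mul _ _
    have e34 : |k₃ * -(k₁ + k₂ + k₃)| = |k₃| * |(-(k₁ + k₂ + k₃))| := abs_mul _ _
    have t1 : |k₁| ≤ |k₁ + k₂| + |k₂| := by simpa using abs_add_le (k₁ + k₂) (-k₂)
    have t2 : |k₂| ≤ |k₁ + k₂| + |k₁| := by simpa using abs_add_le (k₁ + k₂) (-k₁)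
    have t3 : |k₃| ≤ |k₁ + k₂| + |(-(k₁ + k₂ + k₃))| := by
      have h := abs_add_le (-(k₁ + k₂)) (k₁ + k₂ + k₃)
      rw [abs_neg] at h
      have e : -(k₁ + k₂) + (k₁ + k₂ + k₃) = k₃ := by ring
      rw [e] at h
      rw [abs_neg]
      exact h
    have t4 : |(-(k₁ + k₂ + k₃))| ≤ |k₁ + k₂| + |k₃| := by
      rw [abs_neg]
      exact abs_add_le (k₁ + k₂) k₃
    rcases max_choice |k₁| (max |k₂| (max |k₃| |(-(k₁ + k₂ + k₃))|)) with h1 | h1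
    · rw [hmdef, h1]
      linarith [mul_le_mul_of_nonneg_left t1 (abs_nonneg k₁), hM1, e12]
    · rcases max_choice |k₂| (max |k₃| |(-(k₁ + k₂ + k₃))|) with h2 | h2
      · rw [hmdef, h1, h2]
        linarith [mul_le_mul_of_nonneg_left t2 (abs_nonneg k₂), hM1, e12]
      · rcases max_choice |k₃| |(-(k₁ + k₂ + k₃))| with h3 | h3
        · rw [hmdef, h1, h2, h3]
          linarith [mul_le_mul_of_nonneg_left t3 (abs_nonneg k₃), hM2, e34]
        · rw [hmdef, h1, h2, h3]
          linarith [mul_le_mul_of_nonneg_left t4 (abs_nonneg (-(k₁ + k₂ + k₃))), hM2, e34]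
  -- lower bounds for the four linear factors
  have f1 : |k₅| - m ≤ |k₅ - k₁| := by
    have h := abs_sub_abs_le_abs_sub k₅ k₁; linarith
  have f2 : |k₅| - m ≤ |k₅ - k₂| := by
    have h := abs_sub_abs_le_abs_sub k₅ k₂; linarith
  have f3 : |k₅| - m ≤ |k₅ - k₃| := by
    have h := abs_sub_abs_le_abs_sub k₅ k₃; linarith
  have f4 : |k₅| - m ≤ |k₅ + (k₁ + k₂ + k₃)| := by
    have h := abs_sub_abs_le_abs_sub k₅ (-(k₁ + k₂ + k₃))
    rw [sub_neg_eq_add] at h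
    linarith
  set t : ℤ := |k₅| - m with htdef
  have ht0 : 0 ≤ t := by rw [htdef]; linarith
  have hP4 : t * (t * (t * t)) ≤ |k₅ - k₁| * (|k₅ - k₂| * (|k₅ - k₃| * |k₅ + (k₁ + k₂ + k₃)|)) := by
    have n1 : 0 ≤ |k₅ - k₁| := abs_nonneg _
    have n2 : 0 ≤ |k₅ - k₂| := abs_nonneg _
    have n3 : 0 ≤ |k₅ - k₃| := abs_nonneg _
    have n4 : 0 ≤ |k₅ + (k₁ + k₂ + k₃)| := abs_nonneg _
    have h34 : t * t ≤ |k₅ - k₃| * |k₅ + (k₁ + k₂ + k₃)| := mul_le_mul f3 f4 ht0 n3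
    have h234 : t * (t * t) ≤ |k₅ - k₂| * (|k₅ - k₃| * |k₅ + (k₁ + k₂ + k₃)|) :=
      mul_le_mul f2 h34 (mul_nonneg ht0 ht0) n2
    exact mul_le_mul f1 h234 (mul_nonneg ht0 (mul_nonneg ht0 ht0)) n1
  have ht2 : |k₅| ≤ 2 * t := by rw [htdef]; linarith
  have hK0 : (0:ℤ) ≤ |k₅| := abs_nonneg _
  have hKK : (512 * m)^2 ≤ k₅^2 := by
    rw [← sq_abs k₅]
    have : (0:ℤ) ≤ 512 * m := by linarith
    exact pow_le_pow_left₀ this (le_of_lt hbig') 2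
  have hK4 : k₅^2 * k₅^2 ≤ 16 * (t * (t * (t * t))) := by
    have h1 : |k₅|^4 ≤ (2*t)^4 := pow_le_pow_left₀ hK0 ht2 4
    have h2 : |k₅|^4 = k₅^2 * k₅^2 := by rw [← sq_abs k₅]; ring
    linarith [h1, h2]
  have ht16 : 16384 * ((m * m) * k₅^2) ≤ t * (t * (t * t)) := by
    have hk2 : 262144 * ((m*m) * k₅^2) ≤ k₅^2 * k₅^2 := by
      have hsq : (0:ℤ) ≤ k₅^2 := sq_nonneg _
      linarith [mul_le_mul_of_nonneg_right hKK hsq]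
    linarith
  -- the main integer inequality
  have habsD : |Dz| = |k₁ + k₂| * (|k₅ - k₁| * (|k₅ - k₂| * (|k₅ - k₃| * |k₅ + (k₁ + k₂ + k₃)|))) := by
    rw [hDz, abs_mul, abs_mul, abs_mul, abs_mul]; ring
  have hDz0 : Dz ≠ 0 := by
    rw [hDz]
    exact mul_ne_zero (mul_ne_zero (mul_ne_zero (mul_ne_zero hs hka) hkb) hkc) hkd
  have Hint : |Nz| * |k₁ + k₂| ≤ (Mz + m * |k₁ + k₂|) * (5 * |Dz|) := by
    have hs0 : (0:ℤ) ≤ |k₁ + k₂| := abs_nonneg _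
    have step1 : |Nz| * |k₁ + k₂| ≤ (120 * (m^4 * k₅^2)) * |k₁ + k₂| :=
      mul_le_mul_of_nonneg_right hNb hs0
    have hX : (0:ℤ) ≤ m^4 * k₅^2 := by positivity
    have step2 : 120 * (m^4 * k₅^2) ≤ (m*m) * (5 * (16384 * ((m*m) * k₅^2))) := by linarith [hX]
    have step3 : (m*m) * (5 * (16384 * ((m*m) * k₅^2))) ≤ (m*m) * (5 * (t * (t * (t * t)))) := by
      have := mul_le_mul_of_nonneg_left ht16 (mul_nonneg hm0 hm0)
      linarith [this]
    have step4 : (m*m) * (5 * (t * (t * (t * t)))) ≤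
        (m*m) * (5 * (|k₅ - k₁| * (|k₅ - k₂| * (|k₅ - k₃| * |k₅ + (k₁ + k₂ + k₃)|)))) := by
      have := mul_le_mul_of_nonneg_left hP4 (mul_nonneg hm0 hm0)
      linarith [this]
    have step5 : (120 * (m^4 * k₅^2)) * |k₁ + k₂| ≤
        ((m*m) * (5 * (|k₅ - k₁| * (|k₅ - k₂| * (|k₅ - k₃| * |k₅ + (k₁ + k₂ + k₃)|))))) * |k₁ + k₂| :=
      mul_le_mul_of_nonneg_right (le_trans step2 (le_trans step3 step4)) hs0
    have step6 : ((m*m) * (5 * (|k₅ - k₁| * (|k₅ - k₂| * (|k₅ - k₃| * |k₅ + (k₁ + k₂ + k₃)|))))) * |k₁ + k₂|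
        ≤ (Mz + m * |k₁ + k₂|) * (5 * |Dz|) := by
      rw [habsD]
      have hfac : (0:ℤ) ≤ 5 * (|k₁ + k₂| * (|k₅ - k₁| * (|k₅ - k₂| * (|k₅ - k₃| * |k₅ + (k₁ + k₂ + k₃)|)))) := by
        positivity
      linarith [mul_le_mul_of_nonneg_right hm2 hfac]
    linarith
  -- pass to ℝ
  have hsrpos : (0:ℝ) < ((|k₁ + k₂| : ℤ) : ℝ) := by
    exact_mod_cast abs_pos.mpr hs
  have hDrpos : (0:ℝ) < 5 * ((|Dz| : ℤ) : ℝ) := by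
    have : (0:ℤ) < |Dz| := abs_pos.mpr hDz0
    have : (0:ℝ) < ((|Dz| : ℤ) : ℝ) := by exact_mod_cast this
    linarith
  have key : ((|Nz| : ℤ) : ℝ) / (5 * ((|Dz| : ℤ) : ℝ)) ≤
      ((Mz : ℤ) : ℝ) / ((|k₁ + k₂| : ℤ) : ℝ) + ((m : ℤ) : ℝ) := by
    have h2 : ((Mz : ℤ) : ℝ) / ((|k₁ + k₂| : ℤ) : ℝ) + ((m : ℤ) : ℝ)
        = ((Mz + m * |k₁ + k₂| : ℤ) : ℝ) / ((|k₁ + k₂| : ℤ) : ℝ) := by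
      rw [div_add' _ _ _ (ne_of_gt hsrpos)]
      push_cast
      ring_nf
    rw [h2, div_le_div_iff₀ hDrpos hsrpos]
    exact_mod_cast Hint
  calc γ ^ 2 * ((|Nz| : ℤ) : ℝ) / (5 * ((|Dz| : ℤ) : ℝ))
      = γ ^ 2 * (((|Nz| : ℤ) : ℝ) / (5 * ((|Dz| : ℤ) : ℝ))) := by ring
    _ ≤ γ ^ 2 * (((Mz : ℤ) : ℝ) / ((|k₁ + k₂| : ℤ) : ℝ) + ((m : ℤ) : ℝ)) :=
        mul_le_mul_of_nonneg_left key (sq_nonneg γ)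
    _ = 1 * γ ^ 2 * (((Mz : ℤ) : ℝ) / ((|k₁ + k₂| : ℤ) : ℝ) + ((m : ℤ) : ℝ)) := by ring
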